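/- In PCL, contractual implication is stronger than intuitionistic implication: ⊢ (φ ↠ ψ) → (φ → ψ). -/

import Mathlib

/-- Formulae of the contract logic PCL: intuitionistic propositional logic
extended with contractual implication ↠ and an indexed lax modality `says`. -/
inductive PCL (P At : Type) where
  | atom : At → PCL P At
  | top : PCL P At
  | bot : PCL P At
  | and : PCL P At → PCL P At → PCL P At
  | or : PCL P At → PCL P At → PCL P At
  | imp : PCL P At → PCL P At → PCL P At
  | cimp : PCL P At → PCL P At → PCL P At
  | says : P → PCL P At → PCL P At

/-- Hilbert-style provability for PCL: intuitionistic propositional axioms,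
modus ponens, the contractual-implication axioms
⊤↠⊤, (φ↠φ)→φ, (φ'→φ)→(φ↠ψ)→(ψ→ψ')→(φ'↠ψ'),
and the lax `says` axioms. -/
inductive Prov {P At : Type} (Γ : Set (PCL P At)) : PCL P At → Prop where
  | ax {φ} : φ ∈ Γ → Prov Γ φ
  | mp {φ ψ} : Prov Γ (.imp φ ψ) → Prov Γ φ → Prov Γ ψ
  | k (φ ψ) : Prov Γ (.imp φ (.imp ψ φ))
  | s (φ ψ χ) : Prov Γ (.imp (.imp φ (.imp ψ χ)) (.imp (.imp φ ψ) (.imp φ χ)))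
  | andI (φ ψ) : Prov Γ (.imp φ (.imp ψ (.and φ ψ)))
  | andE1 (φ ψ) : Prov Γ (.imp (.and φ ψ) φ)
  | andE2 (φ ψ) : Prov Γ (.imp (.and φ ψ) ψ)
  | orI1 (φ ψ) : Prov Γ (.imp φ (.or φ ψ))
  | orI2 (φ ψ) : Prov Γ (.imp ψ (.or φ ψ))
  | orE (φ ψ χ) : Prov Γ (.imp (.imp φ χ) (.imp (.imp ψ χ) (.imp (.or φ ψ) χ)))
  | topI : Prov Γ .top
  | botE (φ) : Prov Γ (.imp .bot φ)
  | ctop : Prov Γ (.cimp .top .top)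
  | cfix (φ) : Prov Γ (.imp (.cimp φ φ) φ)
  | cmono (φ φ' ψ ψ') :
      Prov Γ (.imp (.imp φ' φ) (.imp (.cimp φ ψ) (.imp (.imp ψ ψ') (.cimp φ' ψ'))))
  | saysI (A φ) : Prov Γ (.imp φ (.says A φ))
  | saysIdem (A φ) : Prov Γ (.imp (.says A (.says A φ)) (.says A φ))
  | saysMono (A φ ψ) : Prov Γ (.imp (.imp φ ψ) (.imp (.says A φ) (.says A ψ)))

namespace Prov

variable {P At : Type} {Γ : Set (PCL P At)} {φ φ' ψ ψ' : PCL P At}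

theorem imp_self (φ : PCL P At) : Prov Γ (.imp φ φ) :=
  ((s φ (.imp φ φ) φ).mp (k φ (.imp φ φ))).mp (k φ φ)

theorem deduction (h : Prov (insert φ Γ) ψ) : Prov Γ (.imp φ ψ) := by
  induction h with
  | ax hmem =>
    rcases hmem with rfl | hmem
    · exact imp_self _
    · exact (k _ φ).mp (ax hmem)
  | mp _ _ ih₁ ih₂ => exact ((s φ _ _).mp ih₁).mp ih₂
  | _ => exact (k _ φ).mp (by aesop (add 50% constructors Prov))

theorem cimp_mono (h₁ : Prov Γ (.imp φ' φ)) (h : Prov Γ (.cimp φ ψ)) (h₂ : Prov Γ (.imp ψ ψ')) :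
    Prov Γ (.cimp φ' ψ') :=
  (((cmono φ φ' ψ ψ').mp h₁).mp h).mp h₂

theorem of_cimp_self (h : Prov Γ (.cimp φ φ)) : Prov Γ φ :=
  (cfix φ).mp h

/-- Given `φ`, the trivial implication `ψ → φ` strengthens `φ ↠ ψ` to `ψ ↠ ψ`,
which yields `ψ` by the axiom `(ψ ↠ ψ) → ψ`. -/
theorem cimp_mp (h : Prov Γ (.cimp φ ψ)) (hφ : Prov Γ φ) : Prov Γ ψ :=
  of_cimp_self (cimp_mono ((k φ ψ).mp hφ) h (imp_self ψ))

end Prov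

/-- contractual implication is stronger than intuitionistic
implication: ⊢ (φ ↠ ψ) → (φ → ψ). -/
theorem stmt6 {P At : Type} (φ ψ : PCL P At) :
    Prov (∅ : Set (PCL P At)) (.imp (.cimp φ ψ) (.imp φ ψ)) := by
  refine Prov.deduction (Prov.deduction ?_)
  exact Prov.cimp_mp (φ := φ) (Prov.ax (by simp)) (Prov.ax (by simp))
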